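/- arXiv:2410.20143 — 2 statements merged into one kernel-verified Lean document; each statement's English description precedes it below -/
import Mathlib

section
/- The rule R_{|S|} (the cardinal-utility maximizing PB rule for projects with multiple permissible costs) is range-abiding and range-unanimous on instances where the unanimously approved cost sets contain positive costs. Range-abidingness: for every instance, every allocation x selected by R_{|S|} (i.e., maximizing total cardinal utility among valid allocations), and every project j such that τ_j contains a positive cost, we have x_j ≤ τ̄_j. Range-unanimity: if for every project j the set τ_j contains a positive cost and Σ_j τ̄_j ≤ b, then the allocation (τ̄_1, …, τ̄_m) is selected by R_{|S|}. -/
variable {N : Type*}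

/-- A valid budget allocation: each project gets one of its permissible costs, and the
total allocated amount is within the budget. -/
def validAlloc {m : ℕ} (C : Fin m → Finset ℕ) (b : ℕ) (x : Fin m → ℕ) : Prop :=
  (∀ j, x j ∈ C j) ∧ ∑ j, x j ≤ b

/-- Cardinal utility of voter `i` at allocation `x`: the number of funded projects whose
allocated cost falls within the bounds reported by `i`. -/
def cardUtil {m : ℕ} (lo hi : N → Fin m → ℕ) (i : N) (x : Fin m → ℕ) : ℕ :=
  (Finset.univ.filter fun j : Fin m => x j ≠ 0 ∧ lo i j ≤ x j ∧ x j ≤ hi i j).card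

/-- The rule `R_{|S|}` selects exactly the valid allocations maximizing total cardinal
utility. -/
def selectedCard [Fintype N] {m : ℕ} (C : Fin m → Finset ℕ) (b : ℕ)
    (lo hi : N → Fin m → ℕ) (x : Fin m → ℕ) : Prop :=
  validAlloc C b x ∧ ∀ y : Fin m → ℕ, validAlloc C b y →
    ∑ i : N, cardUtil lo hi i y ≤ ∑ i : N, cardUtil lo hi i x

/-- The set `τ_j` of unanimously approved costs of project `j`. -/
def unanimousCosts [Fintype N] {m : ℕ} (C : Fin m → Finset ℕ) (lo hi : N → Fin m → ℕ)
    (j : Fin m) : Finset ℕ :=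
  (C j).filter fun v => ∀ i : N, lo i j ≤ v ∧ v ≤ hi i j

/-!
Total cardinal utility can be counted project by project: it is the sum over projects `j` of
the number of voters approving the cost `x j`. A positive unanimously approved cost is approved
by every voter, so it maximises this count, and any other permissible cost is approved by fewer
voters. Hence lowering an overspent project to `τ̄_j` keeps the allocation valid and strictly
raises total utility, and the allocation `(τ̄_j)_j` attains the upper bound `m · |N|`.
-/

open Finset

section ApprovalCount

variable [Fintype N] {m : ℕ} {C : Fin m → Finset ℕ} {b : ℕ} {lo hi : N → Fin m → ℕ}

def approvalCount (lo hi : N → Fin m → ℕ) (j : Fin m) (c : ℕ) : ℕ :=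
  #{i | c ≠ 0 ∧ lo i j ≤ c ∧ c ≤ hi i j}

theorem sum_cardUtil_eq_sum_approvalCount (x : Fin m → ℕ) :
    ∑ i, cardUtil lo hi i x = ∑ j, approvalCount lo hi j (x j) := by
  simp only [cardUtil, approvalCount, card_filter]
  exact sum_comm

theorem approvalCount_le_card (j : Fin m) (c : ℕ) :
    approvalCount lo hi j c ≤ Fintype.card N :=
  card_le_univ _

theorem approvalCount_eq_card {j : Fin m} {c : ℕ} (hc : c ∈ unanimousCosts C lo hi j)
    (hc0 : c ≠ 0) : approvalCount lo hi j c = Fintype.card N := by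
  rw [approvalCount, filter_true_of_mem fun i _ => ⟨hc0, (mem_filter.mp hc).2 i⟩, card_univ]

theorem approvalCount_lt_card {j : Fin m} {c : ℕ} (hc : c ∈ C j)
    (hnot : c ∉ unanimousCosts C lo hi j) : approvalCount lo hi j c < Fintype.card N := by
  obtain ⟨i, hout⟩ : ∃ i, ¬(lo i j ≤ c ∧ c ≤ hi i j) := by
    simpa [unanimousCosts, hc] using hnot
  rw [← card_univ]
  exact card_lt_card (filter_ssubset.mpr ⟨i, mem_univ i, fun h => hout h.2⟩)

theorem validAlloc_update_of_le {x : Fin m → ℕ} (hx : validAlloc C b x) {j : Fin m} {c : ℕ}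
    (hc : c ∈ C j) (hle : c ≤ x j) : validAlloc C b (Function.update x j c) := by
  refine ⟨fun k => ?_, le_trans (sum_le_sum fun k _ => ?_) hx.2⟩ <;>
    rcases eq_or_ne k j with rfl | hk
  · simpa using hc
  · simpa [hk] using hx.1 k
  · simpa using hle
  · simp [hk]

theorem selectedCard.mem_unanimousCosts_of_lt {x : Fin m → ℕ} (hx : selectedCard C b lo hi x)
    {j : Fin m} {c : ℕ} (hc : c ∈ unanimousCosts C lo hi j) (hc0 : c ≠ 0) (hlt : c < x j) :
    x j ∈ unanimousCosts C lo hi j := by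
  by_contra hxj
  set y := Function.update x j c
  have hy : validAlloc C b y := validAlloc_update_of_le hx.1 (mem_filter.mp hc).1 hlt.le
  have hgain : ∑ k, approvalCount lo hi k (x k) < ∑ k, approvalCount lo hi k (y k) := by
    refine sum_lt_sum (fun k _ => ?_) ⟨j, mem_univ j, ?_⟩
    · rcases eq_or_ne k j with rfl | hk
      · simp [y, approvalCount_eq_card hc hc0, approvalCount_le_card]
      · simp [y, hk]
    · simpa [y, approvalCount_eq_card hc hc0] using approvalCount_lt_card (hx.1.1 j) hxj
  have := hx.2 y hy
  rw [sum_cardUtil_eq_sum_approvalCount, sum_cardUtil_eq_sum_approvalCount] at this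
  omega

theorem selectedCard.le_max'_unanimousCosts {x : Fin m → ℕ} (hx : selectedCard C b lo hi x)
    {j : Fin m} (hne : (unanimousCosts C lo hi j).Nonempty)
    (hpos : ∃ v ∈ unanimousCosts C lo hi j, 0 < v) :
    x j ≤ (unanimousCosts C lo hi j).max' hne := by
  obtain ⟨v, hv, hv0⟩ := hpos
  by_contra! hlt
  have hτ0 : (unanimousCosts C lo hi j).max' hne ≠ 0 := (hv0.trans_le (le_max' _ v hv)).ne'
  exact hlt.not_ge (le_max' _ _ (hx.mem_unanimousCosts_of_lt (max'_mem _ hne) hτ0 hlt))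

theorem selectedCard_of_forall_mem_unanimousCosts {x : Fin m → ℕ} (hx : validAlloc C b x)
    (hux : ∀ j, x j ∈ unanimousCosts C lo hi j) (hx0 : ∀ j, x j ≠ 0) :
    selectedCard C b lo hi x := by
  refine ⟨hx, fun y _ => ?_⟩
  simp only [sum_cardUtil_eq_sum_approvalCount, approvalCount_eq_card (hux _) (hx0 _)]
  exact sum_le_sum fun j _ => approvalCount_le_card j (y j)

end ApprovalCount

theorem stmt_11_general [Fintype N] {m : ℕ}
    (C : Fin m → Finset ℕ) (b : ℕ)
    (lo hi : N → Fin m → ℕ) :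
    (∀ x : Fin m → ℕ, selectedCard C b lo hi x →
      ∀ (j : Fin m) (hne : (unanimousCosts C lo hi j).Nonempty),
        (∃ v ∈ unanimousCosts C lo hi j, 0 < v) →
          x j ≤ (unanimousCosts C lo hi j).max' hne) ∧
    (∀ hne : ∀ j, (unanimousCosts C lo hi j).Nonempty,
      (∀ j, ∃ v ∈ unanimousCosts C lo hi j, 0 < v) →
        (∑ j, (unanimousCosts C lo hi j).max' (hne j)) ≤ b →
          selectedCard C b lo hi fun j => (unanimousCosts C lo hi j).max' (hne j)) := by
  refine ⟨fun x hx j hne hpos => hx.le_max'_unanimousCosts hne hpos, fun hne hpos hb => ?_⟩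
  have hmem : ∀ j, (unanimousCosts C lo hi j).max' (hne j) ∈ unanimousCosts C lo hi j :=
    fun j => max'_mem _ _
  refine selectedCard_of_forall_mem_unanimousCosts
    ⟨fun j => (mem_filter.mp (hmem j)).1, hb⟩ hmem fun j => ?_
  obtain ⟨v, hv, hv0⟩ := hpos j
  exact (hv0.trans_le (le_max' _ v hv)).ne'

/-- The cardinal-utility maximizing rule `R_{|S|}` is range-abiding and range-unanimous,
on instances where the unanimously approved cost sets contain positive costs. -/
theorem stmt_11 [Fintype N] [Nonempty N] {m : ℕ}
    (C : Fin m → Finset ℕ) (hC0 : ∀ j, 0 ∈ C j) (b : ℕ)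
    (lo hi : N → Fin m → ℕ)
    (hlC : ∀ i j, lo i j ∈ C j) (hhC : ∀ i j, hi i j ∈ C j)
    (hlh : ∀ i j, lo i j ≤ hi i j) :
    (∀ x : Fin m → ℕ, selectedCard C b lo hi x →
      ∀ (j : Fin m) (hne : (unanimousCosts C lo hi j).Nonempty),
        (∃ v ∈ unanimousCosts C lo hi j, 0 < v) →
          x j ≤ (unanimousCosts C lo hi j).max' hne) ∧
    (∀ hne : ∀ j, (unanimousCosts C lo hi j).Nonempty,
      (∀ j, ∃ v ∈ unanimousCosts C lo hi j, 0 < v) →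
        (∑ j, (unanimousCosts C lo hi j).max' (hne j)) ≤ b →
          selectedCard C b lo hi fun j => (unanimousCosts C lo hi j).max' (hne j)) :=
  stmt_11_general C b lo hi
end

section
/- The PB-CC rule satisfies pro-affordability: let I be a PB instance under weakly ordinal preferences, x ∈ W(I), and x′ ∈ P a project with c(x′) < c(x) and x′ ⪰_i x for every voter i. Then x′ ∈ W(I). -/
open Classical in
/-- The rank of project `p` for a voter with weak order `R`: one plus the number of
projects strictly preferred to `p`. -/
noncomputable def rankOf {P : Type*} [Fintype P] (R : P → P → Prop) (p : P) : ℕ :=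
  1 + (Finset.univ.filter fun q => R q p ∧ ¬ R p q).card

/-- The minimum rank (for preference `R`) of a project in `S`; `Fintype.card P` if `S`
is empty. -/
noncomputable def minRank {P : Type*} [Fintype P] (R : P → P → Prop) (S : Finset P) : ℕ :=
  if h : S.Nonempty then S.inf' h (rankOf R) else Fintype.card P

/-- The Chamberlin–Courant score of `S`: `Σ_i (m − min_{p∈S} r_i(p))`. -/
noncomputable def ccScore {N P : Type*} [Fintype N] [Fintype P]
    (R : N → P → P → Prop) (S : Finset P) : ℕ :=
  ∑ i : N, (Fintype.card P - minRank (R i) S)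

/-- `S` is selected by the PB-CC rule: it is a nonempty feasible set maximizing the
Chamberlin–Courant score among nonempty feasible sets. -/
def PBCCsel {N P : Type*} [Fintype N] [Fintype P] (c : P → ℕ) (b : ℕ)
    (R : N → P → P → Prop) (S : Finset P) : Prop :=
  S.Nonempty ∧ (∑ p ∈ S, c p) ≤ b ∧
    ∀ T : Finset P, T.Nonempty → (∑ p ∈ T, c p) ≤ b → ccScore R T ≤ ccScore R S

/-- Project `p` wins under PB-CC: it belongs to some selected set. -/
def winsCC {N P : Type*} [Fintype N] [Fintype P] (c : P → ℕ) (b : ℕ)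
    (R : N → P → P → Prop) (p : P) : Prop :=
  ∃ S : Finset P, PBCCsel c b R S ∧ p ∈ S

/-!
Exchanging `x` for `x'` in a selected set keeps it feasible, since `x'` is cheaper, and weakly
lowers every voter's best rank, since `x'` is weakly preferred to `x` and rank is monotone along a
transitive preference. The exchanged set is therefore still optimal, and it contains `x'`.
-/

theorem Finset.sum_insert_le {α M : Type*} [AddCommMonoid M] [PartialOrder M]
    [CanonicallyOrderedAdd M] [DecidableEq α] (s : Finset α) (a : α) (f : α → M) :
    ∑ p ∈ insert a s, f p ≤ f a + ∑ p ∈ s, f p := by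
  by_cases ha : a ∈ s
  · rw [Finset.insert_eq_of_mem ha]
    exact le_add_self
  · rw [Finset.sum_insert ha]

section

variable {N P : Type*} [Fintype N] [Fintype P]

theorem rankOf_le_rankOf {R : P → P → Prop} (htrans : Transitive R) {p q : P} (h : R p q) :
    rankOf R p ≤ rankOf R q := by
  unfold rankOf
  gcongr 1 + ?_
  refine Finset.card_le_card fun r hr => ?_
  simp only [Finset.mem_filter, Finset.mem_univ, true_and] at hr ⊢
  exact ⟨htrans hr.1 h, fun hqr => hr.2 (htrans h hqr)⟩

theorem minRank_insert_erase_le [DecidableEq P] {R : P → P → Prop} (htrans : Transitive R)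
    {S : Finset P} (hS : S.Nonempty) {x x' : P} (hx : x ∈ S) (h : R x' x) :
    minRank R (insert x' (S.erase x)) ≤ minRank R S := by
  rw [minRank, minRank, dif_pos (Finset.insert_nonempty _ _), dif_pos hS, Finset.le_inf'_iff]
  intro p hp
  rcases eq_or_ne p x with rfl | hpx
  · exact (Finset.inf'_le _ (Finset.mem_insert_self _ _)).trans (rankOf_le_rankOf htrans h)
  · exact Finset.inf'_le _ (Finset.mem_insert_of_mem (Finset.mem_erase.mpr ⟨hpx, hp⟩))

theorem ccScore_le_ccScore {R : N → P → P → Prop} {S T : Finset P}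
    (h : ∀ i, minRank (R i) T ≤ minRank (R i) S) : ccScore R S ≤ ccScore R T :=
  Finset.sum_le_sum fun i _ => Nat.sub_le_sub_left (h i) _

theorem PBCCsel.insert_erase [DecidableEq P] {c : P → ℕ} {b : ℕ} {R : N → P → P → Prop}
    {S : Finset P} (hS : PBCCsel c b R S) (htrans : ∀ i, Transitive (R i)) {x x' : P}
    (hx : x ∈ S) (hcost : c x' ≤ c x) (hpref : ∀ i, R i x' x) :
    PBCCsel c b R (insert x' (S.erase x)) := by
  obtain ⟨hne, hfeas, hmax⟩ := hS
  refine ⟨Finset.insert_nonempty _ _, ?_, fun T hT hTfeas => (hmax T hT hTfeas).trans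
    (ccScore_le_ccScore fun i => minRank_insert_erase_le (htrans i) hne hx (hpref i))⟩
  calc ∑ p ∈ insert x' (S.erase x), c p ≤ c x' + ∑ p ∈ S.erase x, c p :=
        Finset.sum_insert_le _ _ _
    _ ≤ c x + ∑ p ∈ S.erase x, c p := Nat.add_le_add_right hcost _
    _ = ∑ p ∈ S, c p := Finset.add_sum_erase S c hx
    _ ≤ b := hfeas

end

theorem stmt_15_general {N P : Type*} [Fintype N] [Fintype P]
    (c : P → ℕ) (b : ℕ)
    (R : N → P → P → Prop)
    (htrans : ∀ i, Transitive (R i))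
    (x : P) (hx : winsCC c b R x)
    (x' : P) (hcost : c x' < c x) (hpref : ∀ i, R i x' x) :
    winsCC c b R x' := by
  classical
  obtain ⟨S, hS, hxS⟩ := hx
  exact ⟨_, hS.insert_erase htrans hxS hcost.le hpref, Finset.mem_insert_self _ _⟩

/-- Pro-affordability of the PB-CC rule: if `x` wins, `x'` is cheaper than `x`, and
every voter weakly prefers `x'` to `x`, then `x'` also wins. -/
theorem stmt_15 {N P : Type*} [Fintype N] [Nonempty N] [Fintype P] [DecidableEq P]
    (c : P → ℕ) (hc : ∀ p, 0 < c p) (b : ℕ)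
    (R : N → P → P → Prop)
    (htotal : ∀ i p q, R i p q ∨ R i q p)
    (htrans : ∀ i, Transitive (R i))
    (hafford : ∃ p, c p ≤ b)
    (x : P) (hx : winsCC c b R x)
    (x' : P) (hcost : c x' < c x) (hpref : ∀ i, R i x' x) :
    winsCC c b R x' :=
  stmt_15_general c b R htrans x hx x' hcost hpref
end
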